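/- arXiv:2505.03245 — 4 statements merged into one kernel-verified Lean document; each statement's English description precedes it below -/
import Mathlib

section
/- Let n > 2k ≥ 2 be integers, -1 ≤ s ≤ 0, and k* = (k+1)(n+2sk)/(n-2k). If u ∈ C^1([0,R]) satisfies u(R) = 0, u'(r) ≥ 0 for 0 < r < R, then there is a constant C depending only on n, k, s such that (∫_0^R r^{n-1+2sk} |u(r)|^{k*} dr)^{1/k*} ≤ C (∫_0^R r^{n-k} [u'(r)]^{k+1} dr)^{1/(k+1)}. -/
open MeasureTheory Set

/-!
Put `v = -u ≥ 0`, `E = ∫₀^R r^m u'^p` and `I = ∫₀^R r^a v^q`. Hölder's inequality on `[r, R]`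
against the weight `t^(-m/(p-1))` gives the decay estimate `r^((m+1-p)/p) v(r) ≤ K E^(1/p)`.
Integrating by parts, `(a+1) I = q ∫₀^R r^(a+1) v^(q-1) u'`. Under the scaling relation
`(a+1) p = q (m+1-p)` this integrand factors as
`(r^((m+1-p)/p) v)^(q/p-1) (r^m u'^p)^(1/p) (r^a v^q)^(1-1/p)`; bounding the first factor by the
decay estimate and the rest by Hölder gives `I ≤ c I^(1-1/p)`, hence `I^(1/p) ≤ c`.
The paper's exponents are `p = k+1`, `m = n-k`, `a = n-1+2sk` and `q = k*`.
-/

theorem nonneg_on_Icc_of_nonneg_on_Ioo {f : ℝ → ℝ} {a b : ℝ} (hab : a < b)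
    (hf : ContinuousOn f (Icc a b)) (h : ∀ x ∈ Ioo a b, 0 ≤ f x) :
    ∀ x ∈ Icc a b, 0 ≤ f x := by
  have hsub : closure (Ioo a b) ⊆ Icc a b ∩ f ⁻¹' Ici 0 :=
    closure_minimal (fun x hx => ⟨Ioo_subset_Icc_self hx, h x hx⟩)
      (hf.preimage_isClosed_of_isClosed isClosed_Icc isClosed_Ici)
  rw [closure_Ioo hab.ne] at hsub
  exact fun x hx => (hsub hx).2

theorem continuousOn_rpow_mul_rpow {f : ℝ → ℝ} {s : Set ℝ} {a q : ℝ} (hf : ContinuousOn f s)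
    (ha : 0 ≤ a) (hq : 0 ≤ q) : ContinuousOn (fun t => t ^ a * f t ^ q) s :=
  (continuousOn_id.rpow_const fun _ _ => .inr ha).mul (hf.rpow_const fun _ _ => .inr hq)

theorem memLp_restrict_Ioc_of_continuousOn {f : ℝ → ℝ} {a b : ℝ}
    (hf : ContinuousOn f (Icc a b)) (p : ENNReal) : MemLp f p (volume.restrict (Ioc a b)) := by
  obtain ⟨C, hC⟩ := isCompact_Icc.exists_bound_of_continuousOn hf
  exact .of_bound ((hf.mono Ioc_subset_Icc_self).aestronglyMeasurable measurableSet_Ioc) C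
    (ae_restrict_of_forall_mem measurableSet_Ioc fun x hx => hC x (Ioc_subset_Icc_self hx))

theorem intervalIntegral_rpow_mul_rpow_le {f g : ℝ → ℝ} {a b θ : ℝ} (hab : a ≤ b)
    (hθ0 : 0 < θ) (hθ1 : θ < 1) (hf : ContinuousOn f (Icc a b)) (hg : ContinuousOn g (Icc a b))
    (hf0 : ∀ x ∈ Icc a b, 0 ≤ f x) (hg0 : ∀ x ∈ Icc a b, 0 ≤ g x) :
    ∫ x in a..b, f x ^ θ * g x ^ (1 - θ)
      ≤ (∫ x in a..b, f x) ^ θ * (∫ x in a..b, g x) ^ (1 - θ) := by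
  have hθ1' : 0 < 1 - θ := sub_pos.2 hθ1
  have hconj : θ⁻¹.HolderConjugate (1 - θ)⁻¹ :=
    Real.holderConjugate_iff.2 ⟨one_lt_inv₀ hθ0 |>.2 hθ1, by simp⟩
  have hae : ∀ {φ : ℝ → ℝ}, (∀ x ∈ Icc a b, 0 ≤ φ x) →
      ∀ᵐ x ∂volume.restrict (Ioc a b), 0 ≤ φ x := fun hφ =>
    ae_restrict_of_forall_mem measurableSet_Ioc fun x hx => hφ x (Ioc_subset_Icc_self hx)
  have hinv : ∀ {φ : ℝ → ℝ} {e : ℝ}, e ≠ 0 → (∀ x ∈ Icc a b, 0 ≤ φ x) →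
      ∫ x in Ioc a b, (φ x ^ e) ^ e⁻¹ = ∫ x in Ioc a b, φ x := fun he hφ =>
    setIntegral_congr_fun measurableSet_Ioc fun x hx =>
      Real.rpow_rpow_inv (hφ x (Ioc_subset_Icc_self hx)) he
  have holder := integral_mul_le_Lp_mul_Lq_of_nonneg hconj
    (hae fun x hx => Real.rpow_nonneg (hf0 x hx) θ)
    (hae fun x hx => Real.rpow_nonneg (hg0 x hx) (1 - θ))
    (memLp_restrict_Ioc_of_continuousOn (hf.rpow_const fun _ _ => .inr hθ0.le) _)
    (memLp_restrict_Ioc_of_continuousOn (hg.rpow_const fun _ _ => .inr hθ1'.le) _)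
  simp only [intervalIntegral.integral_of_le hab]
  rwa [hinv hθ0.ne' hf0, hinv hθ1'.ne' hg0, one_div, inv_inv, one_div, inv_inv] at holder

theorem integral_rpow_le_of_lt_neg_one {e r R : ℝ} (he : e < -1) (hr : 0 < r) (hrR : r ≤ R) :
    ∫ t in r..R, t ^ e ≤ r ^ (e + 1) / -(e + 1) := by
  rw [integral_rpow (.inr ⟨he.ne, notMem_uIcc_of_lt hr (hr.trans_le hrR)⟩), ← neg_div_neg_eq,
    neg_sub]
  exact div_le_div_of_nonneg_right (sub_le_self _ (Real.rpow_nonneg (hr.le.trans hrR) _))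
    (by linarith)

noncomputable def hardyTailConstant (p m : ℝ) : ℝ := ((p - 1) / (m + 1 - p)) ^ (1 - 1 / p)

theorem hardyTailConstant_pos {p m : ℝ} (hp : 1 < p) (hm : p - 1 < m) :
    0 < hardyTailConstant p m :=
  Real.rpow_pos_of_pos (div_pos (by linarith) (by linarith)) _

theorem rpow_mul_rpow_one_div_mul_rpow_eq_self {p m t w : ℝ} (hp0 : 0 < p) (hp1 : p ≠ 1)
    (ht : 0 < t) (hw : 0 ≤ w) :
    (t ^ m * w ^ p) ^ (1 / p) * (t ^ (-(m / (p - 1)))) ^ (1 - 1 / p) = w := by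
  have hexp : -(m / (p - 1)) * (1 - p⁻¹) = -(m * p⁻¹) := by
    field_simp [sub_ne_zero.2 hp1]
  rw [Real.mul_rpow (Real.rpow_nonneg ht.le _) (Real.rpow_nonneg hw _), ← Real.rpow_mul ht.le,
    ← Real.rpow_mul ht.le, one_div, Real.rpow_rpow_inv hw hp0.ne', hexp, Real.rpow_neg ht.le]
  field_simp

theorem rpow_mul_integral_le_hardyTailConstant {p m r R : ℝ} {w : ℝ → ℝ} (hp : 1 < p)
    (hm : p - 1 < m) (hr : 0 < r) (hrR : r ≤ R) (hw : ContinuousOn w (Icc r R))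
    (hw0 : ∀ t ∈ Icc r R, 0 ≤ w t) :
    r ^ ((m + 1 - p) / p) * ∫ t in r..R, w t
      ≤ hardyTailConstant p m * (∫ t in r..R, t ^ m * w t ^ p) ^ (1 / p) := by
  have hp0 : 0 < p := by linarith
  have hp1 : 0 < p - 1 := by linarith
  have hθ : 1 / p < 1 := (div_lt_one hp0).2 hp
  set e := -(m / (p - 1)) with he
  have he1 : e < -1 := by rw [he, neg_lt_neg_iff, one_lt_div hp1]; linarith
  have hpos : ∀ t ∈ Icc r R, 0 < t := fun t ht => hr.trans_le ht.1
  have hsplit : EqOn w (fun t => (t ^ m * w t ^ p) ^ (1 / p) * (t ^ e) ^ (1 - 1 / p))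
      (uIcc r R) := fun t ht => by
    rw [uIcc_of_le hrR] at ht
    exact (rpow_mul_rpow_one_div_mul_rpow_eq_self hp0 hp.ne' (hpos t ht) (hw0 t ht)).symm
  have holder := intervalIntegral_rpow_mul_rpow_le (f := fun t => t ^ m * w t ^ p)
    (g := fun t => t ^ e) hrR (one_div_pos.2 hp0) hθ
    (continuousOn_rpow_mul_rpow hw (by linarith) hp0.le)
    (continuousOn_id.rpow_const fun t ht => .inl (hpos t ht).ne')
    (fun t ht => mul_nonneg (Real.rpow_nonneg (hpos t ht).le _) (Real.rpow_nonneg (hw0 t ht) _))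
    (fun t ht => Real.rpow_nonneg (hpos t ht).le _)
  have hE0 : 0 ≤ ∫ t in r..R, t ^ m * w t ^ p :=
    intervalIntegral.integral_nonneg hrR fun t ht =>
      mul_nonneg (Real.rpow_nonneg (hpos t ht).le _) (Real.rpow_nonneg (hw0 t ht) _)
  have hpow0 : 0 ≤ ∫ t in r..R, t ^ e :=
    intervalIntegral.integral_nonneg hrR fun t ht => Real.rpow_nonneg (hpos t ht).le _
  calc r ^ ((m + 1 - p) / p) * ∫ t in r..R, w t
      ≤ r ^ ((m + 1 - p) / p) * ((∫ t in r..R, t ^ m * w t ^ p) ^ (1 / p)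
          * (∫ t in r..R, t ^ e) ^ (1 - 1 / p)) := by
        rw [intervalIntegral.integral_congr hsplit]
        gcongr
    _ ≤ r ^ ((m + 1 - p) / p) * ((∫ t in r..R, t ^ m * w t ^ p) ^ (1 / p)
          * (r ^ (e + 1) / -(e + 1)) ^ (1 - 1 / p)) := by
        gcongr
        exact integral_rpow_le_of_lt_neg_one he1 hr hrR
    _ = hardyTailConstant p m * (∫ t in r..R, t ^ m * w t ^ p) ^ (1 / p) := by
        have hexp : (e + 1) * (1 - 1 / p) = -((m + 1 - p) / p) := by
          rw [he]; field_simp; ring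
        have hc : -(e + 1) = ((p - 1) / (m + 1 - p))⁻¹ := by
          rw [he]; field_simp; ring
        rw [Real.div_rpow (Real.rpow_nonneg hr.le _) (by linarith), ← Real.rpow_mul hr.le, hexp,
          Real.rpow_neg hr.le, hc, Real.inv_rpow (div_nonneg hp1.le (by linarith)),
          hardyTailConstant]
        field_simp

theorem integral_eq_neg_of_hasDerivAt {u u' : ℝ → ℝ} {r R : ℝ} (hrR : r ≤ R)
    (hu : ∀ t ∈ Icc r R, HasDerivAt u (u' t) t) (hu' : ContinuousOn u' (Icc r R))
    (huR : u R = 0) : ∫ t in r..R, u' t = -u r := by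
  rw [intervalIntegral.integral_eq_sub_of_hasDerivAt (fun t ht => hu t (uIcc_of_le hrR ▸ ht))
    (hu'.intervalIntegrable_of_Icc hrR), huR, zero_sub]

theorem neg_nonneg_of_hasDerivAt {u u' : ℝ → ℝ} {R : ℝ}
    (hu : ∀ t ∈ Icc 0 R, HasDerivAt u (u' t) t) (hu' : ContinuousOn u' (Icc 0 R))
    (hu'0 : ∀ t ∈ Icc 0 R, 0 ≤ u' t) (huR : u R = 0) : ∀ r ∈ Icc 0 R, 0 ≤ -u r := by
  intro r hr
  have hsub : Icc r R ⊆ Icc 0 R := Icc_subset_Icc_left hr.1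
  rw [← integral_eq_neg_of_hasDerivAt hr.2 (fun t ht => hu t (hsub ht)) (hu'.mono hsub) huR]
  exact intervalIntegral.integral_nonneg hr.2 fun t ht => hu'0 t (hsub ht)

theorem rpow_mul_neg_le_of_hasDerivAt {p m R r : ℝ} {u u' : ℝ → ℝ} (hp : 1 < p)
    (hm : p - 1 < m) (hr : r ∈ Ioc 0 R) (hu : ∀ t ∈ Icc 0 R, HasDerivAt u (u' t) t)
    (hu' : ContinuousOn u' (Icc 0 R)) (hu'0 : ∀ t ∈ Icc 0 R, 0 ≤ u' t) (huR : u R = 0) :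
    r ^ ((m + 1 - p) / p) * (-u r)
      ≤ hardyTailConstant p m * (∫ t in 0..R, t ^ m * u' t ^ p) ^ (1 / p) := by
  have hsub : Icc r R ⊆ Icc 0 R := Icc_subset_Icc_left hr.1.le
  rw [← integral_eq_neg_of_hasDerivAt hr.2 (fun t ht => hu t (hsub ht)) (hu'.mono hsub) huR]
  refine (rpow_mul_integral_le_hardyTailConstant hp hm hr.1 hr.2 (hu'.mono hsub)
    fun t ht => hu'0 t (hsub ht)).trans ?_
  have hK := (hardyTailConstant_pos hp hm).le
  have hf0 : ∀ t ∈ Icc 0 R, 0 ≤ t ^ m * u' t ^ p := fun t ht =>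
    mul_nonneg (Real.rpow_nonneg ht.1 _) (Real.rpow_nonneg (hu'0 t ht) _)
  gcongr
  · exact intervalIntegral.integral_nonneg hr.2 fun t ht => hf0 t (hsub ht)
  · exact intervalIntegral.integral_mono_interval hr.1.le hr.2 le_rfl
      (ae_restrict_of_forall_mem measurableSet_Ioc fun t ht => hf0 t (Ioc_subset_Icc_self ht))
      ((continuousOn_rpow_mul_rpow hu' (by linarith) (by linarith)).intervalIntegrable_of_Icc
        (hr.1.le.trans hr.2))

theorem integral_rpow_mul_neg_rpow_eq {a q R : ℝ} {u u' : ℝ → ℝ} (ha : 0 ≤ a) (hq : 1 ≤ q)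
    (hR : 0 ≤ R) (hu : ∀ r ∈ Icc 0 R, HasDerivAt u (u' r) r) (hu' : ContinuousOn u' (Icc 0 R))
    (huR : u R = 0) :
    (a + 1) * ∫ r in 0..R, r ^ a * (-u r) ^ q
      = q * ∫ r in 0..R, r ^ (a + 1) * ((-u r) ^ (q - 1) * u' r) := by
  have hv : ContinuousOn (fun r => -u r) (Icc 0 R) := fun r hr =>
    (hu r hr).continuousAt.continuousWithinAt.neg
  have hI : IntervalIntegrable (fun r => r ^ a * (-u r) ^ q) volume 0 R :=
    (continuousOn_rpow_mul_rpow hv ha (by linarith)).intervalIntegrable_of_Icc hR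
  have hJ : IntervalIntegrable (fun r => r ^ (a + 1) * ((-u r) ^ (q - 1) * u' r)) volume 0 R :=
    ((continuousOn_id.rpow_const fun _ _ => .inr (by linarith)).mul
      ((hv.rpow_const fun _ _ => .inr (by linarith)).mul hu')).intervalIntegrable_of_Icc hR
  have hG : ∀ r ∈ uIcc 0 R, HasDerivAt (fun r => r ^ (a + 1) * (-u r) ^ q)
      ((a + 1) * (r ^ a * (-u r) ^ q) - q * (r ^ (a + 1) * ((-u r) ^ (q - 1) * u' r))) r := by
    intro r hr
    rw [uIcc_of_le hR] at hr
    have hpow := Real.hasDerivAt_rpow_const (x := r) (p := a + 1) (.inr (by linarith))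
    rw [add_sub_cancel_right] at hpow
    have hpow' : HasDerivAt (fun r => (-u r) ^ q) (q * (-u r) ^ (q - 1) * -u' r) r :=
      (Real.hasDerivAt_rpow_const (.inr hq)).comp r (hu r hr).neg
    exact (hpow.mul hpow').congr_deriv (by ring)
  have hFTC := intervalIntegral.integral_eq_sub_of_hasDerivAt hG
    ((hI.const_mul _).sub (hJ.const_mul _))
  rw [intervalIntegral.integral_sub (hI.const_mul _) (hJ.const_mul _),
    intervalIntegral.integral_const_mul, intervalIntegral.integral_const_mul, huR, neg_zero,
    Real.zero_rpow (by linarith), Real.zero_rpow (by linarith)] at hFTC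
  linarith

theorem rpow_add_one_mul_rpow_sub_one_mul_eq {p m a q t v w : ℝ} (hp : 0 < p) (hq : 1 < q)
    (hscale : (a + 1) * p = q * (m + 1 - p)) (ht : 0 < t) (hv : 0 ≤ v) (hw : 0 ≤ w) :
    t ^ (a + 1) * (v ^ (q - 1) * w) = (t ^ ((m + 1 - p) / p) * v) ^ (q / p - 1)
      * ((t ^ m * w ^ p) ^ (1 / p) * (t ^ a * v ^ q) ^ (1 - 1 / p)) := by
  have hT : t ^ (a + 1)
      = t ^ ((m + 1 - p) / p * (q / p - 1)) * (t ^ (m * (1 / p)) * t ^ (a * (1 - 1 / p))) := by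
    rw [← Real.rpow_add ht, ← Real.rpow_add ht]
    congr 1
    field_simp
    linear_combination hscale
  have hV : v ^ (q - 1) = v ^ (q / p - 1) * v ^ (q * (1 - 1 / p)) := by
    have hexp : q / p - 1 + q * (1 - 1 / p) = q - 1 := by field_simp; ring
    rw [← Real.rpow_add' hv (by rw [hexp]; linarith), hexp]
  have hW : (w ^ p) ^ (1 / p) = w := by rw [one_div, Real.rpow_rpow_inv hw hp.ne']
  rw [Real.mul_rpow (Real.rpow_nonneg ht.le _) hv,
    Real.mul_rpow (Real.rpow_nonneg ht.le _) (Real.rpow_nonneg hw _),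
    Real.mul_rpow (Real.rpow_nonneg ht.le _) (Real.rpow_nonneg hv _), ← Real.rpow_mul ht.le,
    ← Real.rpow_mul ht.le, ← Real.rpow_mul ht.le, ← Real.rpow_mul hv, hW, hT, hV]
  ring

theorem integral_rpow_add_one_mul_rpow_sub_one_mul_le {p m a q R : ℝ} {u u' : ℝ → ℝ}
    (hp : 1 < p) (hpq : p ≤ q) (ha : 0 ≤ a) (hm : p - 1 < m)
    (hscale : (a + 1) * p = q * (m + 1 - p)) (hR : 0 < R)
    (hu : ∀ r ∈ Icc 0 R, HasDerivAt u (u' r) r) (hu' : ContinuousOn u' (Icc 0 R))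
    (hu'0 : ∀ r ∈ Icc 0 R, 0 ≤ u' r) (huR : u R = 0) :
    ∫ r in 0..R, r ^ (a + 1) * ((-u r) ^ (q - 1) * u' r)
      ≤ (hardyTailConstant p m * (∫ r in 0..R, r ^ m * u' r ^ p) ^ (1 / p)) ^ (q / p - 1)
        * ((∫ r in 0..R, r ^ m * u' r ^ p) ^ (1 / p)
          * (∫ r in 0..R, r ^ a * (-u r) ^ q) ^ (1 - 1 / p)) := by
  have hp0 : 0 < p := by linarith
  have hδ : 0 ≤ q / p - 1 := by rw [sub_nonneg, le_div_iff₀ hp0]; linarith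
  have hv0 := neg_nonneg_of_hasDerivAt hu hu' hu'0 huR
  have hv : ContinuousOn (fun r => -u r) (Icc 0 R) := fun r hr =>
    (hu r hr).continuousAt.continuousWithinAt.neg
  have hf : ContinuousOn (fun t => t ^ m * u' t ^ p) (Icc 0 R) :=
    continuousOn_rpow_mul_rpow hu' (by linarith) hp0.le
  have hg : ContinuousOn (fun t => t ^ a * (-u t) ^ q) (Icc 0 R) :=
    continuousOn_rpow_mul_rpow hv ha (by linarith)
  have hf0 : ∀ t ∈ Icc 0 R, 0 ≤ t ^ m * u' t ^ p := fun t ht =>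
    mul_nonneg (Real.rpow_nonneg ht.1 _) (Real.rpow_nonneg (hu'0 t ht) _)
  have hg0 : ∀ t ∈ Icc 0 R, 0 ≤ t ^ a * (-u t) ^ q := fun t ht =>
    mul_nonneg (Real.rpow_nonneg ht.1 _) (Real.rpow_nonneg (hv0 t ht) _)
  have hθ : 1 / p < 1 := (div_lt_one hp0).2 hp
  set F := hardyTailConstant p m * (∫ r in 0..R, r ^ m * u' r ^ p) ^ (1 / p)
  calc ∫ r in 0..R, r ^ (a + 1) * ((-u r) ^ (q - 1) * u' r)
      ≤ ∫ r in 0..R, F ^ (q / p - 1)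
          * ((r ^ m * u' r ^ p) ^ (1 / p) * (r ^ a * (-u r) ^ q) ^ (1 - 1 / p)) := by
        refine intervalIntegral.integral_mono_on_of_le_Ioo hR.le ?_ ?_ fun r hr => ?_
        · exact ((continuousOn_id.rpow_const fun _ _ => .inr (by linarith)).mul
            ((hv.rpow_const fun _ _ => .inr (by linarith)).mul hu')).intervalIntegrable_of_Icc
            hR.le
        · exact (continuousOn_const.mul ((hf.rpow_const fun _ _ => .inr (by positivity)).mul
            (hg.rpow_const fun _ _ => .inr (by linarith)))).intervalIntegrable_of_Icc hR.le
        have hr' := Ioo_subset_Icc_self hr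
        rw [rpow_add_one_mul_rpow_sub_one_mul_eq hp0 (by linarith) hscale hr.1 (hv0 r hr')
          (hu'0 r hr')]
        exact mul_le_mul_of_nonneg_right (Real.rpow_le_rpow
          (mul_nonneg (Real.rpow_nonneg hr.1.le _) (hv0 r hr'))
          (rpow_mul_neg_le_of_hasDerivAt hp hm ⟨hr.1, hr.2.le⟩ hu hu' hu'0 huR) hδ)
          (mul_nonneg (Real.rpow_nonneg (hf0 r hr') _) (Real.rpow_nonneg (hg0 r hr') _))
    _ = F ^ (q / p - 1)
          * ∫ r in 0..R, (r ^ m * u' r ^ p) ^ (1 / p) * (r ^ a * (-u r) ^ q) ^ (1 - 1 / p) :=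
        intervalIntegral.integral_const_mul _ _
    _ ≤ _ := by
        have hF0 : 0 ≤ F := mul_nonneg (hardyTailConstant_pos hp hm).le
          (Real.rpow_nonneg (intervalIntegral.integral_nonneg hR.le hf0) _)
        gcongr
        exact intervalIntegral_rpow_mul_rpow_le hR.le (by positivity) hθ hf hg hf0 hg0

theorem rpow_le_of_le_mul_rpow {x c θ : ℝ} (hx : 0 ≤ x) (hc : 0 ≤ c) (hθ : θ < 1)
    (h : x ≤ c * x ^ θ) : x ^ (1 - θ) ≤ c := by
  rcases hx.eq_or_lt with rfl | hx
  · rwa [Real.zero_rpow (by linarith)]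
  · rwa [Real.rpow_sub hx, Real.rpow_one, div_le_iff₀ (Real.rpow_pos_of_pos hx θ)]

noncomputable def cknConstant (p m a q : ℝ) : ℝ :=
  (q / (a + 1) * hardyTailConstant p m ^ (q / p - 1)) ^ (p / q)

theorem cknConstant_pos {p m a q : ℝ} (hp : 1 < p) (hm : p - 1 < m) (ha : 0 < a + 1)
    (hq : 0 < q) : 0 < cknConstant p m a q := by
  have := hardyTailConstant_pos hp hm
  unfold cknConstant
  positivity

theorem cknConstant_mul_eq {p m a q F : ℝ} (hp : 0 < p) (hq : 0 < q) (ha : 0 ≤ a)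
    (hK : 0 ≤ hardyTailConstant p m) (hF : 0 ≤ F) :
    (q / (a + 1) * ((hardyTailConstant p m * F) ^ (q / p - 1) * F)) ^ (p / q)
      = cknConstant p m a q * F := by
  have hexp : (q / p - 1 + 1) * (p / q) = 1 := by field_simp; ring
  have hδ : q / p - 1 + 1 ≠ 0 := by rw [sub_add_cancel]; positivity
  rw [Real.mul_rpow hK hF, mul_assoc, ← Real.rpow_add_one' hF hδ, ← mul_assoc,
    Real.mul_rpow (by positivity) (Real.rpow_nonneg hF _), ← Real.rpow_mul hF, hexp,
    Real.rpow_one, cknConstant]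

theorem rpow_integral_rpow_mul_abs_rpow_le {p m a q R : ℝ} {u u' : ℝ → ℝ} (hp : 1 < p)
    (hpq : p ≤ q) (ha : 0 ≤ a) (hscale : (a + 1) * p = q * (m + 1 - p)) (hR : 0 < R)
    (hu : ∀ r ∈ Icc 0 R, HasDerivAt u (u' r) r) (hu' : ContinuousOn u' (Icc 0 R))
    (huR : u R = 0) (hu'0 : ∀ r ∈ Ioo 0 R, 0 ≤ u' r) :
    (∫ r in 0..R, r ^ a * |u r| ^ q) ^ (1 / q)
      ≤ cknConstant p m a q * (∫ r in 0..R, r ^ m * u' r ^ p) ^ (1 / p) := by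
  have hp0 : 0 < p := by linarith
  have hq : 1 < q := by linarith
  have hm : p - 1 < m := by nlinarith
  replace hu'0 := nonneg_on_Icc_of_nonneg_on_Ioo hR hu' hu'0
  have hv0 := neg_nonneg_of_hasDerivAt hu hu' hu'0 huR
  have hJ := integral_rpow_add_one_mul_rpow_sub_one_mul_le hp hpq ha hm hscale hR hu hu' hu'0 huR
  have hIBP := integral_rpow_mul_neg_rpow_eq ha hq.le hR.le hu hu' huR
  set E := ∫ r in 0..R, r ^ m * u' r ^ p
  set I := ∫ r in 0..R, r ^ a * (-u r) ^ q
  set K := hardyTailConstant p m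
  have hE0 : 0 ≤ E := intervalIntegral.integral_nonneg hR.le fun t ht =>
    mul_nonneg (Real.rpow_nonneg ht.1 _) (Real.rpow_nonneg (hu'0 t ht) _)
  have hI0 : 0 ≤ I := intervalIntegral.integral_nonneg hR.le fun t ht =>
    mul_nonneg (Real.rpow_nonneg ht.1 _) (Real.rpow_nonneg (hv0 t ht) _)
  have hK0 : 0 ≤ K := (hardyTailConstant_pos hp hm).le
  have habs : ∫ r in 0..R, r ^ a * |u r| ^ q = I := by
    refine intervalIntegral.integral_congr fun r hr => ?_
    rw [uIcc_of_le hR.le] at hr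
    simp only [abs_of_nonpos (neg_nonneg.1 (hv0 r hr))]
  have hIp : I ^ (1 / p) ≤ q / (a + 1) * ((K * E ^ (1 / p)) ^ (q / p - 1) * E ^ (1 / p)) := by
    have h := rpow_le_of_le_mul_rpow hI0
      (c := q / (a + 1) * ((K * E ^ (1 / p)) ^ (q / p - 1) * E ^ (1 / p))) (θ := 1 - 1 / p)
      (by positivity)
      (by linarith [one_div_pos.2 hp0]) ?_
    · rwa [sub_sub_cancel] at h
    calc I = q / (a + 1) * ∫ r in 0..R, r ^ (a + 1) * ((-u r) ^ (q - 1) * u' r) := by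
          rw [div_mul_eq_mul_div, eq_div_iff (by linarith), ← hIBP, mul_comm]
      _ ≤ q / (a + 1) * ((K * E ^ (1 / p)) ^ (q / p - 1) * (E ^ (1 / p) * I ^ (1 - 1 / p))) := by
          gcongr
      _ = _ := by ring
  calc (∫ r in 0..R, r ^ a * |u r| ^ q) ^ (1 / q) = (I ^ (1 / p)) ^ (p / q) := by
        rw [habs, ← Real.rpow_mul hI0]; field_simp
    _ ≤ (q / (a + 1) * ((K * E ^ (1 / p)) ^ (q / p - 1) * E ^ (1 / p))) ^ (p / q) := by gcongr
    _ = cknConstant p m a q * E ^ (1 / p) :=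
        cknConstant_mul_eq hp0 (by linarith) ha hK0 (Real.rpow_nonneg hE0 _)

theorem stmt2_general (n k : ℕ) (hk : 1 ≤ k) (hn : 2 * k < n) (s : ℝ) (hs1 : -1 ≤ s) :
    ∃ C : ℝ, 0 < C ∧ ∀ (R : ℝ), 0 < R → ∀ (u u' : ℝ → ℝ),
      (∀ r ∈ Set.Icc (0:ℝ) R, HasDerivAt u (u' r) r) →
      ContinuousOn u' (Set.Icc (0:ℝ) R) →
      u R = 0 → (∀ r ∈ Set.Ioo (0:ℝ) R, 0 ≤ u' r) →
      (∫ r in (0:ℝ)..R, r ^ ((n : ℝ) - 1 + 2 * s * k)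
          * |u r| ^ (((k : ℝ) + 1) * ((n : ℝ) + 2 * s * k) / ((n : ℝ) - 2 * k)))
            ^ (((n : ℝ) - 2 * k) / (((k : ℝ) + 1) * ((n : ℝ) + 2 * s * k)))
        ≤ C * (∫ r in (0:ℝ)..R, r ^ ((n : ℝ) - k) * (u' r) ^ (k + 1)) ^ (1 / ((k : ℝ) + 1)) := by
  have hk1 : (1 : ℝ) ≤ k := by exact_mod_cast hk
  have hn1 : 2 * (k : ℝ) + 1 ≤ n := by exact_mod_cast hn
  set q := ((k : ℝ) + 1) * ((n : ℝ) + 2 * s * k) / ((n : ℝ) - 2 * k) with hq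
  have hpq : (k : ℝ) + 1 ≤ q := by
    rw [hq, le_div_iff₀ (by linarith)]
    exact mul_le_mul_of_nonneg_left (by nlinarith) (by linarith)
  have ha : 0 ≤ (n : ℝ) - 1 + 2 * s * k := by nlinarith
  have hscale :
      ((n : ℝ) - 1 + 2 * s * k + 1) * ((k : ℝ) + 1) = q * ((n : ℝ) - k + 1 - (k + 1)) := by
    rw [hq]; field_simp [show (n : ℝ) - 2 * k ≠ 0 by linarith]; ring
  refine ⟨cknConstant (k + 1) (n - k) (n - 1 + 2 * s * k) q,
    cknConstant_pos (by linarith) (by linarith) (by linarith) (by linarith),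
    fun R hR u u' hu hu' huR hu'0 => ?_⟩
  have hpow : ∀ x : ℝ, x ^ ((k : ℝ) + 1) = x ^ (k + 1) := fun x => by
    exact_mod_cast Real.rpow_natCast x (k + 1)
  simpa only [hpow, hq, one_div_div] using
    rpow_integral_rpow_mul_abs_rpow_le (by linarith) hpq ha hscale hR hu hu' huR hu'0

/-- One-dimensional weighted (Caffarelli–Kohn–Nirenberg type) inequality, the radial case
of the Hessian Hardy–Sobolev inequality: for `n > 2k`, `-1 ≤ s ≤ 0` and
`k* = (k+1)(n+2sk)/(n-2k)`, there is `C = C(n,k,s)` such that for all `R > 0` and all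
`C¹` profiles `u` on `[0,R]` with `u(R) = 0` and `u' ≥ 0` on `(0,R)`,
`(∫₀^R r^{n-1+2sk} |u|^{k*} dr)^{1/k*} ≤ C (∫₀^R r^{n-k} (u')^{k+1} dr)^{1/(k+1)}`. -/
theorem stmt2 (n k : ℕ) (hk : 1 ≤ k) (hn : 2 * k < n) (s : ℝ) (hs1 : -1 ≤ s) (hs2 : s ≤ 0) :
    ∃ C : ℝ, 0 < C ∧ ∀ (R : ℝ), 0 < R → ∀ (u u' : ℝ → ℝ),
      (∀ r ∈ Set.Icc (0:ℝ) R, HasDerivAt u (u' r) r) →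
      ContinuousOn u' (Set.Icc (0:ℝ) R) →
      u R = 0 → (∀ r ∈ Set.Ioo (0:ℝ) R, 0 ≤ u' r) →
      (∫ r in (0:ℝ)..R, r ^ ((n : ℝ) - 1 + 2 * s * k)
          * |u r| ^ (((k : ℝ) + 1) * ((n : ℝ) + 2 * s * k) / ((n : ℝ) - 2 * k)))
            ^ (((n : ℝ) - 2 * k) / (((k : ℝ) + 1) * ((n : ℝ) + 2 * s * k)))
        ≤ C * (∫ r in (0:ℝ)..R, r ^ ((n : ℝ) - k) * (u' r) ^ (k + 1)) ^ (1 / ((k : ℝ) + 1)) :=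
  stmt2_general n k hk hn s hs1
end

section
/- Let k ≥ 1, θ ∈ (0,1), p > k, and suppose f : Ω̄ × R → (0,∞) satisfies ∫_z^0 f(x,τ) dτ ≤ ((1-θ)/(k+1)) |z| f(x,z) for all z < -m. Define f_m(x,z) = f(x,z) for z > -m and f_m(x,z) = m^{-p} f(x,-m) |z|^p for z ≤ -m. Then there exists θ' > 0 depending only on θ and p such that ∫_z^0 f_m(x,τ) dτ ≤ ((1-θ')/(k+1)) |z| f_m(x,z) for all z < -m. -/
open MeasureTheory Set intervalIntegral

/-! On `(-∞, -m]` the truncation is `C |τ|^p` with `C = m^{-p} f(x,-m)`, so its integral from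
`z` to `-m` is `C (|z|^{p+1} - m^{p+1}) / (p+1)`, while letting `z ↑ -m` in the hypothesis gives
`∫_{-m}^0 f ≤ ((1-θ)/(k+1)) C m^{p+1}`. The left side of the claim is thus a combination
`a (s - t) + b t` with `s = C |z|^{p+1} ≥ t = C m^{p+1}`, and the right side is `c s`, so it
suffices that `a = 1/(p+1)` and `b = (1-θ)/(k+1)` are both at most `c = (1-θ')/(k+1)`.
Since `k` is an integer below `p`, `k + 1 ≤ ⌈p⌉₊ < p + 1`, which makes
`θ' = min θ (1 - ⌈p⌉₊/(p+1))` work. -/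

lemma integral_le_of_forall_lt {g v : ℝ → ℝ} (hg : Continuous g) (hv : Continuous v) {a b : ℝ}
    (h : ∀ w < a, ∫ τ in w..b, g τ ≤ v w) : ∫ τ in a..b, g τ ≤ v a := by
  have hprim : Continuous fun w => ∫ τ in w..b, g τ := by
    simp only [integral_symm b]
    exact (continuous_primitive (fun _ _ => hg.intervalIntegrable _ _) b).neg
  have ha : a ∈ closure (Iio a) := by rw [closure_Iio]; exact self_mem_Iic
  exact (isClosed_le hprim hv).closure_subset_iff.2 h ha

noncomputable def powerTruncation (g : ℝ → ℝ) (m p z : ℝ) : ℝ :=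
  if -m < z then g z else m ^ (-p) * g (-m) * |z| ^ p

section PowerTruncation

variable {g : ℝ → ℝ} {m p z : ℝ}

lemma powerTruncation_of_le (hz : z ≤ -m) :
    powerTruncation g m p z = m ^ (-p) * g (-m) * |z| ^ p :=
  if_neg hz.not_gt

lemma powerTruncation_of_neg_le (hm : 0 < m) (hz : -m ≤ z) : powerTruncation g m p z = g z := by
  rcases hz.lt_or_eq with hz | rfl
  · exact if_pos hz
  · rw [powerTruncation_of_le le_rfl, abs_neg, abs_of_pos hm, mul_right_comm,
      ← Real.rpow_add hm, neg_add_cancel, Real.rpow_zero, one_mul]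

lemma integral_le_mul_rpow_of_forall_lt_neg (hg : Continuous g) (hm : 0 < m) {b : ℝ}
    (h : ∀ w < -m, ∫ τ in w..0, g τ ≤ b * |w| * g w) :
    ∫ τ in (-m)..0, g τ ≤ b * (m ^ (-p) * g (-m) * m ^ (p + 1)) := by
  have hm_eq : m = m ^ (-p) * m ^ (p + 1) := by
    rw [← Real.rpow_add hm, neg_add_cancel_left, Real.rpow_one]
  have := integral_le_of_forall_lt hg (by fun_prop) h
  rw [abs_neg, abs_of_pos hm] at this
  linear_combination this + b * g (-m) * hm_eq

lemma abs_mul_powerTruncation_of_le (hm : 0 < m) (hz : z ≤ -m) :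
    |z| * powerTruncation g m p z = m ^ (-p) * g (-m) * |z| ^ (p + 1) := by
  have hz0 : |z| ≠ 0 := abs_ne_zero.2 (hz.trans_lt (neg_lt_zero.2 hm)).ne
  rw [powerTruncation_of_le hz, Real.rpow_add_one hz0]
  ring

lemma integral_abs_rpow_of_le_neg (hp : p ≠ -1) (hm : 0 < m) (hz : z ≤ -m) :
    ∫ τ in z..-m, |τ| ^ p = (|z| ^ (p + 1) - m ^ (p + 1)) / (p + 1) := by
  have hneg : EqOn (fun τ : ℝ => |τ| ^ p) (fun τ => (-τ) ^ p) (uIcc z (-m)) := by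
    intro τ hτ
    rw [uIcc_of_le hz] at hτ
    simp only [abs_of_neg (hτ.2.trans_lt (neg_lt_zero.2 hm))]
  have h0 : (0 : ℝ) ∉ uIcc m (-z) := by
    rw [uIcc_of_le (by linarith)]
    exact fun h => hm.not_ge h.1
  rw [integral_congr hneg, integral_comp_neg (fun u : ℝ => u ^ p), neg_neg,
    integral_rpow (Or.inr ⟨hp, h0⟩), abs_of_neg (hz.trans_lt (neg_lt_zero.2 hm))]

lemma integral_powerTruncation (hg : Continuous g) (hp : p ≠ -1) (hm : 0 < m) (hz : z ≤ -m) :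
    ∫ τ in z..0, powerTruncation g m p τ
      = m ^ (-p) * g (-m) * ((|z| ^ (p + 1) - m ^ (p + 1)) / (p + 1)) + ∫ τ in (-m)..0, g τ := by
  have htail : EqOn (powerTruncation g m p) (fun τ => m ^ (-p) * g (-m) * |τ| ^ p)
      (uIcc z (-m)) := by
    intro τ hτ
    rw [uIcc_of_le hz] at hτ
    exact powerTruncation_of_le hτ.2
  have hhead : EqOn (powerTruncation g m p) g (uIcc (-m) 0) := by
    intro τ hτ
    rw [uIcc_of_le (neg_nonpos.2 hm.le)] at hτ
    exact powerTruncation_of_neg_le hm hτ.1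
  have htail_cont : ContinuousOn (fun τ : ℝ => m ^ (-p) * g (-m) * |τ| ^ p) (uIcc z (-m)) := by
    refine continuousOn_const.mul (continuous_abs.continuousOn.rpow_const fun τ hτ => Or.inl ?_)
    rw [uIcc_of_le hz] at hτ
    exact abs_ne_zero.2 (hτ.2.trans_lt (neg_lt_zero.2 hm)).ne
  rw [← integral_add_adjacent_intervals ((htail_cont.congr htail).intervalIntegrable)
      ((hg.continuousOn.congr hhead).intervalIntegrable),
    integral_congr htail, integral_congr hhead, intervalIntegral.integral_const_mul,
    integral_abs_rpow_of_le_neg hp hm hz]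

end PowerTruncation

lemma mul_sub_add_mul_le {a b c s t : ℝ} (ha : a ≤ c) (hb : b ≤ c) (hts : t ≤ s) (ht : 0 ≤ t) :
    a * (s - t) + b * t ≤ c * s := by
  nlinarith [mul_le_mul_of_nonneg_right ha (sub_nonneg.2 hts), mul_le_mul_of_nonneg_right hb ht]

noncomputable def truncationTheta (θ p : ℝ) : ℝ := min θ (1 - ⌈p⌉₊ / (p + 1))

section TruncationTheta

variable {θ p : ℝ}

lemma truncationTheta_pos (hθ : 0 < θ) (hp : 0 < p) : 0 < truncationTheta θ p :=
  lt_min hθ <| sub_pos.2 <| (div_lt_one (by linarith)).2 (Nat.ceil_lt_add_one hp.le)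

lemma truncationTheta_le : truncationTheta θ p ≤ θ := min_le_left _ _

lemma inv_add_one_le_one_sub_truncationTheta_div {k : ℕ} (hkp : (k : ℝ) < p) :
    1 / (p + 1) ≤ (1 - truncationTheta θ p) / (k + 1) := by
  have hp : 0 < p + 1 := by linarith [k.cast_nonneg (α := ℝ)]
  have hθ' : ⌈p⌉₊ / (p + 1) ≤ 1 - truncationTheta θ p := by
    have := min_le_right θ (1 - ⌈p⌉₊ / (p + 1))
    rw [← truncationTheta] at this
    linarith
  rw [div_le_div_iff₀ hp (by positivity), one_mul]
  calc (k : ℝ) + 1 ≤ ⌈p⌉₊ := by exact_mod_cast Nat.add_one_le_ceil_iff.2 hkp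
    _ = ⌈p⌉₊ / (p + 1) * (p + 1) := (div_mul_cancel₀ _ hp.ne').symm
    _ ≤ (1 - truncationTheta θ p) * (p + 1) := by gcongr

end TruncationTheta

theorem stmt11_general {α : Type*} (θ p : ℝ) (hθ1 : 0 < θ) :
    ∃ θ' : ℝ, 0 < θ' ∧ ∀ (k : ℕ), 1 ≤ k → (k : ℝ) < p →
      ∀ (f : α → ℝ → ℝ) (m : ℝ), 0 < m →
      (∀ x z, 0 < f x z) → (∀ x, Continuous (f x)) →
      (∀ x, ∀ z < -m, (∫ τ in z..0, f x τ) ≤ ((1 - θ) / ((k : ℝ) + 1)) * |z| * f x z) →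
      ∀ x, ∀ z < -m,
        (∫ τ in z..0, (if -m < τ then f x τ else m ^ (-p) * f x (-m) * |τ| ^ p))
          ≤ ((1 - θ') / ((k : ℝ) + 1)) * |z|
            * (if -m < z then f x z else m ^ (-p) * f x (-m) * |z| ^ p) := by
  rcases le_or_gt p 0 with hp | hp
  · exact ⟨θ, hθ1, fun k _ hkp => absurd (hkp.trans_le hp) (Nat.cast_nonneg k).not_gt⟩
  refine ⟨truncationTheta θ p, truncationTheta_pos hθ1 hp,
    fun k _ hkp f m hm hf hfc hAR x z hz => ?_⟩
  change ∫ τ in z..0, powerTruncation (f x) m p τ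
    ≤ (1 - truncationTheta θ p) / ((k : ℝ) + 1) * |z| * powerTruncation (f x) m p z
  set C := m ^ (-p) * f x (-m)
  have hC : 0 ≤ C := mul_nonneg (Real.rpow_nonneg hm.le _) (hf x _).le
  have hmz : m ≤ |z| := by rw [abs_of_neg (by linarith)]; linarith
  have hhead : ∫ τ in (-m)..0, f x τ ≤ (1 - θ) / ((k : ℝ) + 1) * (C * m ^ (p + 1)) :=
    integral_le_mul_rpow_of_forall_lt_neg (hfc x) hm (hAR x)
  have hb : (1 - θ) / ((k : ℝ) + 1) ≤ (1 - truncationTheta θ p) / ((k : ℝ) + 1) := by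
    gcongr
    exact truncationTheta_le
  rw [integral_powerTruncation (hfc x) (by linarith) hm hz.le,
    mul_assoc ((1 - truncationTheta θ p) / ((k : ℝ) + 1)), abs_mul_powerTruncation_of_le hm hz.le]
  calc C * ((|z| ^ (p + 1) - m ^ (p + 1)) / (p + 1)) + ∫ τ in (-m)..0, f x τ
      ≤ 1 / (p + 1) * (C * |z| ^ (p + 1) - C * m ^ (p + 1))
        + (1 - θ) / ((k : ℝ) + 1) * (C * m ^ (p + 1)) := by
        rw [← mul_sub, mul_div_assoc', one_div_mul_eq_div, mul_comm]
        linarith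
    _ ≤ (1 - truncationTheta θ p) / ((k : ℝ) + 1) * (C * |z| ^ (p + 1)) :=
        mul_sub_add_mul_le (inv_add_one_le_one_sub_truncationTheta_div hkp) hb
          (by gcongr) (by positivity)

/-- The power-truncation `f_m(x,z) = f(x,z)` for `z > -m`, `f_m(x,z) = m^{-p} f(x,-m)|z|^p`
for `z ≤ -m`, preserves the Ambrosetti–Rabinowitz-type condition: if
`∫_z^0 f(x,τ)dτ ≤ ((1-θ)/(k+1))|z| f(x,z)` for all `z < -m`, then there is `θ' > 0`
depending only on `θ` and `p` with `∫_z^0 f_m(x,τ)dτ ≤ ((1-θ')/(k+1))|z| f_m(x,z)` for all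
`z < -m`. -/
theorem stmt11 {α : Type*} (θ p : ℝ) (hθ1 : 0 < θ) (hθ2 : θ < 1) :
    ∃ θ' : ℝ, 0 < θ' ∧ ∀ (k : ℕ), 1 ≤ k → (k : ℝ) < p →
      ∀ (f : α → ℝ → ℝ) (m : ℝ), 0 < m →
      (∀ x z, 0 < f x z) → (∀ x, Continuous (f x)) →
      (∀ x, ∀ z < -m, (∫ τ in z..0, f x τ) ≤ ((1 - θ) / ((k : ℝ) + 1)) * |z| * f x z) →
      ∀ x, ∀ z < -m,
        (∫ τ in z..0, (if -m < τ then f x τ else m ^ (-p) * f x (-m) * |τ| ^ p))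
          ≤ ((1 - θ') / ((k : ℝ) + 1)) * |z|
            * (if -m < z then f x z else m ^ (-p) * f x (-m) * |z| ^ p) :=
  stmt11_general θ p hθ1
end

section
/- Let p > 1 and μ : (0,∞) → R be increasing with μ(z) = z^{1/p} for z ≥ 1 and μ(z) = log z for z < 1/2. Then for all a, b > 0, (a - b)(μ(a) - μ(b)) ≥ c (a - b)(a^{1/p} - b^{1/p}) for some constant c > 0 depending only on p and μ; in particular both sides are nonnegative since μ and z ↦ z^{1/p} are increasing. -/
/-!
Put `q = 1/p ∈ (0, 1)`. It suffices to find `c > 0` with `c · (z^q)' ≤ μ'` on `(0, ∞)`: then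
`μ - c · z^q` is increasing, and for any increasing `f` the product `(a - b)(f a - f b)` is
nonnegative. For `z > 1` the two derivatives agree; for `z < 1/2` we have `μ' z = z⁻¹`, which
dominates `q z^(q-1)` because `z ≤ 1`; on the compact interval `[1/2, 1]` the continuous positive
`μ'` is bounded below by some `m > 0`, while `q z^(q-1) ≤ z⁻¹ ≤ 2` there.
-/

open Set

lemma MonotoneOn.mul_sub_nonneg {α : Type*} [Ring α] [LinearOrder α] [IsOrderedRing α]
    {f : α → α} {s : Set α} (hf : MonotoneOn f s) {a b : α} (ha : a ∈ s) (hb : b ∈ s) :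
    0 ≤ (a - b) * (f a - f b) := by
  rcases le_total a b with hab | hba
  · exact mul_nonneg_of_nonpos_of_nonpos (sub_nonpos.2 hab) (sub_nonpos.2 (hf ha hb hab))
  · exact mul_nonneg (sub_nonneg.2 hba) (sub_nonneg.2 (hf hb ha hba))

lemma monotoneOn_sub_of_hasDerivAt_le {s : Set ℝ} (hs : Convex ℝ s) (hso : IsOpen s)
    {f g f' g' : ℝ → ℝ} (hf : ∀ x ∈ s, HasDerivAt f (f' x) x)
    (hg : ∀ x ∈ s, HasDerivAt g (g' x) x) (hle : ∀ x ∈ s, g' x ≤ f' x) :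
    MonotoneOn (fun x => f x - g x) s := by
  refine monotoneOn_of_hasDerivWithinAt_nonneg (f' := fun x => f' x - g' x) hs
    (fun x hx => ((hf x hx).sub (hg x hx)).continuousAt.continuousWithinAt) ?_ ?_
  · rw [hso.interior_eq]
    exact fun x hx => ((hf x hx).sub (hg x hx)).hasDerivWithinAt
  · rw [hso.interior_eq]
    exact fun x hx => sub_nonneg.2 (hle x hx)

lemma Real.mul_rpow_sub_one_le_inv {q x : ℝ} (hq0 : 0 < q) (hq1 : q ≤ 1) (hx0 : 0 < x)
    (hx1 : x ≤ 1) : q * x ^ (q - 1) ≤ x⁻¹ :=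
  calc q * x ^ (q - 1) ≤ 1 * x ^ (q - 1) := by gcongr
    _ ≤ x ^ (-1 : ℝ) := by
      rw [one_mul]; exact Real.rpow_le_rpow_of_exponent_ge hx0 hx1 (by linarith)
    _ = x⁻¹ := Real.rpow_neg_one x

lemma exists_pos_mul_deriv_rpow_le_deriv {q : ℝ} (hq0 : 0 < q) (hq1 : q ≤ 1) {μ : ℝ → ℝ}
    (hC1 : ContDiffOn ℝ 1 μ (Ioi 0)) (hμ' : ∀ z > (0 : ℝ), 0 < deriv μ z)
    (hμ1 : ∀ z : ℝ, 1 ≤ z → μ z = z ^ q)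
    (hμ2 : ∀ z : ℝ, 0 < z → z < 1 / 2 → μ z = Real.log z) :
    ∃ c > 0, ∀ x > (0 : ℝ), c * (q * x ^ (q - 1)) ≤ deriv μ x := by
  have hmid : Icc (1 / 2 : ℝ) 1 ⊆ Ioi 0 := fun x hx => lt_of_lt_of_le (by norm_num) hx.1
  obtain ⟨z₀, hz₀, hmin⟩ := isCompact_Icc.exists_isMinOn (nonempty_Icc.2 (by norm_num))
    ((hC1.continuousOn_deriv_of_isOpen isOpen_Ioi le_rfl).mono hmid)
  have hm : 0 < deriv μ z₀ := hμ' z₀ (hmid hz₀)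
  refine ⟨min 1 (deriv μ z₀ / 2), lt_min one_pos (half_pos hm), fun x hx => ?_⟩
  have hderiv_rpow : 0 ≤ q * x ^ (q - 1) := by positivity
  rcases lt_or_ge x (1 / 2) with hx_small | hx_half
  · have hμ_log : μ =ᶠ[nhds x] Real.log :=
      Filter.eventuallyEq_of_mem (Ioo_mem_nhds hx hx_small) fun z hz => hμ2 z hz.1 hz.2
    calc min 1 (deriv μ z₀ / 2) * (q * x ^ (q - 1)) ≤ 1 * (q * x ^ (q - 1)) := by gcongr; simp
      _ ≤ x⁻¹ := by rw [one_mul]; exact Real.mul_rpow_sub_one_le_inv hq0 hq1 hx (by linarith)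
      _ = deriv μ x := by rw [hμ_log.deriv_eq, Real.deriv_log]
  rcases le_or_gt x 1 with hx_le | hx_large
  · calc min 1 (deriv μ z₀ / 2) * (q * x ^ (q - 1)) ≤ deriv μ z₀ / 2 * x⁻¹ :=
          mul_le_mul (min_le_right _ _) (Real.mul_rpow_sub_one_le_inv hq0 hq1 hx hx_le)
            hderiv_rpow (by positivity)
      _ ≤ deriv μ z₀ / 2 * 2 := by
          gcongr; rw [inv_le_comm₀ hx two_pos]; linarith
      _ = deriv μ z₀ := by ring
      _ ≤ deriv μ x := hmin ⟨hx_half, hx_le⟩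
  · have hμ_rpow : μ =ᶠ[nhds x] fun z => z ^ q :=
      Filter.eventuallyEq_of_mem (Ioi_mem_nhds hx_large) fun z hz => hμ1 z (le_of_lt hz)
    calc min 1 (deriv μ z₀ / 2) * (q * x ^ (q - 1)) ≤ 1 * (q * x ^ (q - 1)) := by gcongr; simp
      _ = deriv μ x := by rw [one_mul, hμ_rpow.deriv_eq, Real.deriv_rpow_const]

/-- For `p > 1` and `μ : (0,∞) → ℝ` of class `C¹` with `μ' > 0`, `μ(z) = z^{1/p}` for
`z ≥ 1` and `μ(z) = log z` for `0 < z < 1/2`, there is `c > 0` (depending only on `p` and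
`μ`) such that `(a-b)(μ(a)-μ(b)) ≥ c (a-b)(a^{1/p}-b^{1/p})` for all `a, b > 0`; in
particular both sides are nonnegative. -/
theorem stmt13 (p : ℝ) (hp : 1 < p) (μ : ℝ → ℝ)
    (hC1 : ContDiffOn ℝ 1 μ (Set.Ioi 0))
    (hμ' : ∀ z > (0:ℝ), 0 < deriv μ z)
    (hμ1 : ∀ z : ℝ, 1 ≤ z → μ z = z ^ (1 / p))
    (hμ2 : ∀ z : ℝ, 0 < z → z < 1 / 2 → μ z = Real.log z) :
    ∃ c : ℝ, 0 < c ∧ ∀ a b : ℝ, 0 < a → 0 < b →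
      c * ((a - b) * (a ^ (1 / p) - b ^ (1 / p))) ≤ (a - b) * (μ a - μ b) ∧
      0 ≤ (a - b) * (μ a - μ b) ∧
      0 ≤ (a - b) * (a ^ (1 / p) - b ^ (1 / p)) := by
  have hq0 : 0 < 1 / p := by positivity
  have hq1 : 1 / p ≤ 1 := (div_le_one (by positivity)).2 hp.le
  obtain ⟨c, hc, hderiv_le⟩ := exists_pos_mul_deriv_rpow_le_deriv hq0 hq1 hC1 hμ' hμ1 hμ2
  have hrpow_mono : MonotoneOn (fun z : ℝ => z ^ (1 / p)) (Ioi 0) :=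
    fun x hx y _ hxy => Real.rpow_le_rpow (le_of_lt hx) hxy hq0.le
  have hdiff_mono : MonotoneOn (fun z => μ z - c * z ^ (1 / p)) (Ioi 0) :=
    monotoneOn_sub_of_hasDerivAt_le (convex_Ioi 0) isOpen_Ioi
      (fun x hx => ((hC1.differentiableOn one_ne_zero).differentiableAt
        (Ioi_mem_nhds hx)).hasDerivAt)
      (fun x hx => (Real.hasDerivAt_rpow_const (Or.inl (ne_of_gt hx))).const_mul c)
      hderiv_le
  refine ⟨c, hc, fun a b ha hb => ?_⟩
  have hrpow := hrpow_mono.mul_sub_nonneg ha hb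
  have hprod : c * ((a - b) * (a ^ (1 / p) - b ^ (1 / p))) ≤ (a - b) * (μ a - μ b) := by
    linear_combination hdiff_mono.mul_sub_nonneg ha hb
  exact ⟨hprod, (mul_nonneg hc.le hrpow).trans hprod, hrpow⟩
end

section
/- Let λ_1 > 0, θ ∈ (0, λ_1), K > 0 and suppose f : Ω̄ × R^- → (0,∞) satisfies f(x,z) ≤ K + (λ_1 - θ)|z|^k for all z ≤ 0. Let F(x,z) = ∫_z^0 w(x) f(x,τ) dτ with weight w(x) = |x|^{2sk}. If for all u in a class Φ one has λ_1 ∫_Ω w |u|^{k+1} dx ≤ ∫_Ω (-u) S_k(D²u) dx, then the functional J(u) = (1/(k+1))∫_Ω (-u)S_k(D²u)dx - ∫_Ω F(x,u)dx satisfies J(u) ≥ (θ_1/(k+1)) ∫_Ω (-u)S_k(D²u) dx - K_1|Ω| for constants θ_1 ∈ (0,1) and K_1 > 0 depending only on k, θ, λ_1, K and the weight. -/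
open MeasureTheory Set intervalIntegral

/-!
The growth bound on `f` integrates to `F(x,z) ≤ w(x) (K|z| + (λ₁-θ)/(k+1) |z|^{k+1})`.
Absorbing the linear term through `t ≤ ε t^{k+1} + 1 + ε⁻¹` leaves
`F(x,z) ≤ (λ₁-θ/2)/(k+1) w(x)|z|^{k+1} + C w(x)`, and the spectral inequality bounds
`∫ w|u|^{k+1}` by `λ₁⁻¹ ∫(-u)S_k(D²u)`; this gives `θ₁ = θ/(2λ₁)`.
-/

lemma le_mul_pow_succ_add_one_add_inv {k : ℕ} (hk : 1 ≤ k) {ε t : ℝ} (hε : 0 < ε)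
    (ht : 0 ≤ t) : t ≤ ε * t ^ (k + 1) + (1 + ε⁻¹) := by
  rcases le_or_gt t (1 + ε⁻¹) with hle | hgt
  · nlinarith [pow_nonneg ht (k + 1)]
  have h1 : 1 ≤ t := by linarith [inv_pos.2 hε]
  have hεt : 1 ≤ ε * t := by
    rw [← mul_inv_cancel₀ hε.ne']; gcongr; linarith
  calc t ≤ t ^ k := le_self_pow₀ h1 (by omega)
    _ ≤ ε * t * t ^ k := le_mul_of_one_le_left (by positivity) hεt
    _ = ε * t ^ (k + 1) := by ring
    _ ≤ ε * t ^ (k + 1) + (1 + ε⁻¹) := by linarith [inv_pos.2 hε]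

lemma intervalIntegral_to_zero_le_mul_abs_add {g : ℝ → ℝ} {z K c : ℝ} {k : ℕ} (hz : z ≤ 0)
    (hg : IntervalIntegrable g volume z 0) (hbound : ∀ τ ∈ Icc z 0, g τ ≤ K + c * |τ| ^ k) :
    ∫ τ in z..0, g τ ≤ K * |z| + c / (k + 1) * |z| ^ (k + 1) := by
  have hcont : Continuous fun τ : ℝ => K + c * (-τ) ^ k := by fun_prop
  calc ∫ τ in z..0, g τ ≤ ∫ τ in z..0, K + c * (-τ) ^ k :=
        integral_mono_on hz hg (hcont.intervalIntegrable _ _) fun τ hτ => by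
          simpa [abs_of_nonpos hτ.2] using hbound τ hτ
    _ = K * |z| + c / (k + 1) * |z| ^ (k + 1) := by
        have hpow : Continuous fun τ : ℝ => c * (-τ) ^ k := by fun_prop
        rw [integral_add intervalIntegrable_const (hpow.intervalIntegrable _ _),
          intervalIntegral.integral_const_mul,
          integral_comp_neg (fun τ => τ ^ k), integral_pow, intervalIntegral.integral_const,
          abs_of_nonpos hz, neg_zero, zero_pow k.succ_ne_zero, smul_eq_mul]
        ring

lemma intervalIntegral_to_zero_le_pow_succ_add {g : ℝ → ℝ} {z K c δ : ℝ} {k : ℕ} (hk : 1 ≤ k)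
    (hK : 0 < K) (hδ : 0 < δ) (hz : z ≤ 0) (hg : IntervalIntegrable g volume z 0)
    (hbound : ∀ τ ∈ Icc z 0, g τ ≤ K + c * |τ| ^ k) :
    ∫ τ in z..0, g τ ≤ (c + δ) / (k + 1) * |z| ^ (k + 1) + K * (1 + K * (k + 1) / δ) := by
  have hε : 0 < δ / (K * (k + 1)) := by positivity
  have hyoung := mul_le_mul_of_nonneg_left
    (le_mul_pow_succ_add_one_add_inv hk hε (abs_nonneg z)) hK.le
  have hKε : K * (δ / (K * (k + 1))) = δ / (k + 1) := by field_simp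
  rw [inv_div, mul_add, ← mul_assoc, hKε] at hyoung
  calc ∫ τ in z..0, g τ ≤ K * |z| + c / (k + 1) * |z| ^ (k + 1) :=
        intervalIntegral_to_zero_le_mul_abs_add hz hg hbound
    _ ≤ (c + δ) / (k + 1) * |z| ^ (k + 1) + K * (1 + K * (k + 1) / δ) := by
        rw [add_div]; linarith

lemma setIntegral_intervalIntegral_to_zero_le {α : Type*} [MeasurableSpace α] {μ : Measure α}
    {Ω : Set α} (hΩ : MeasurableSet Ω) {w : α → ℝ} (hw0 : ∀ x, 0 ≤ w x) (hw : IntegrableOn w Ω μ)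
    {f : α → ℝ → ℝ} (hfc : ∀ x, Continuous (f x)) {k : ℕ} (hk : 1 ≤ k) {K c δ : ℝ} (hK : 0 < K)
    (hδ : 0 < δ) (hf : ∀ x z, z ≤ 0 → f x z ≤ K + c * |z| ^ k)
    {u : α → ℝ} (hu : ∀ x ∈ Ω, u x ≤ 0)
    (hA : IntegrableOn (fun x => w x * |u x| ^ (k + 1)) Ω μ)
    (hF : IntegrableOn (fun x => ∫ τ in (u x)..0, w x * f x τ) Ω μ) :
    ∫ x in Ω, (∫ τ in (u x)..0, w x * f x τ) ∂μ ≤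
      (c + δ) / (k + 1) * (∫ x in Ω, w x * |u x| ^ (k + 1) ∂μ) +
        K * (1 + K * (k + 1) / δ) * ∫ x in Ω, w x ∂μ := by
  have hpt : ∀ x ∈ Ω, ∫ τ in (u x)..0, w x * f x τ ≤
      (c + δ) / (k + 1) * (w x * |u x| ^ (k + 1)) + K * (1 + K * (k + 1) / δ) * w x := by
    intro x hx
    rw [intervalIntegral.integral_const_mul]
    have hinner := intervalIntegral_to_zero_le_pow_succ_add hk hK hδ (hu x hx)
      ((hfc x).intervalIntegrable _ _) fun τ hτ => hf x τ hτ.2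
    nlinarith [hw0 x]
  calc ∫ x in Ω, (∫ τ in (u x)..0, w x * f x τ) ∂μ
      ≤ ∫ x in Ω, ((c + δ) / (k + 1) * (w x * |u x| ^ (k + 1)) +
          K * (1 + K * (k + 1) / δ) * w x) ∂μ :=
        setIntegral_mono_on hF ((hA.const_mul _).add (hw.const_mul _)) hΩ hpt
    _ = _ := by
        rw [integral_add (hA.const_mul _) (hw.const_mul _), MeasureTheory.integral_const_mul,
          MeasureTheory.integral_const_mul]

theorem stmt16_general (n k : ℕ) (hk : 1 ≤ k) (s lam θ K : ℝ)
    (Ω : Set (EuclideanSpace ℝ (Fin n))) (hΩm : MeasurableSet Ω)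
    (hΩpos : 0 < (volume Ω).toReal)
    (hlam : 0 < lam) (hθ : 0 < θ) (hθl : θ < lam) (hK : 0 < K)
    (hw : IntegrableOn (fun x : EuclideanSpace ℝ (Fin n) => ‖x‖ ^ (2 * s * (k : ℝ))) Ω)
    (f : EuclideanSpace ℝ (Fin n) → ℝ → ℝ)
    (hfc : ∀ x, Continuous (f x))
    (hf : ∀ x z, z ≤ 0 → f x z ≤ K + (lam - θ) * |z| ^ k) :
    ∃ θ₁ K₁ : ℝ, 0 < θ₁ ∧ θ₁ < 1 ∧ 0 < K₁ ∧
      ∀ (u G : EuclideanSpace ℝ (Fin n) → ℝ),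
      (∀ x ∈ Ω, u x ≤ 0) → (∀ x ∈ Ω, 0 ≤ G x) →
      IntegrableOn (fun x => ‖x‖ ^ (2 * s * (k : ℝ)) * |u x| ^ (k + 1)) Ω →
      IntegrableOn (fun x => ‖x‖ ^ (2 * s * (k : ℝ)) * |u x|) Ω →
      IntegrableOn (fun x => (-u x) * G x) Ω →
      IntegrableOn (fun x => ∫ τ in (u x)..0, ‖x‖ ^ (2 * s * (k : ℝ)) * f x τ) Ω →
      lam * (∫ x in Ω, ‖x‖ ^ (2 * s * (k : ℝ)) * |u x| ^ (k + 1))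
        ≤ ∫ x in Ω, (-u x) * G x →
      (θ₁ / ((k : ℝ) + 1)) * (∫ x in Ω, (-u x) * G x) - K₁ * (volume Ω).toReal
        ≤ (1 / ((k : ℝ) + 1)) * (∫ x in Ω, (-u x) * G x)
          - ∫ x in Ω, (∫ τ in (u x)..0, ‖x‖ ^ (2 * s * (k : ℝ)) * f x τ) := by
  have hw0 : ∀ x : EuclideanSpace ℝ (Fin n), 0 ≤ ‖x‖ ^ (2 * s * (k : ℝ)) :=
    fun x => Real.rpow_nonneg (norm_nonneg x) _
  set C := K * (1 + K * (k + 1) / (θ / 2))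
  set W := ∫ x in Ω, ‖x‖ ^ (2 * s * (k : ℝ))
  set V := (volume Ω).toReal
  have hCW : 0 ≤ C * W := mul_nonneg (by positivity) (setIntegral_nonneg hΩm fun x _ => hw0 x)
  refine ⟨θ / (2 * lam), C * W / V + 1, by positivity,
    by rw [div_lt_one (by positivity)]; linarith, by positivity, ?_⟩
  intro u G hu _ hA _ _ hF hspec
  set A := ∫ x in Ω, ‖x‖ ^ (2 * s * (k : ℝ)) * |u x| ^ (k + 1)
  set I := ∫ x in Ω, (-u x) * G x
  have hFA : _ ≤ (lam - θ + θ / 2) / (k + 1) * A + C * W :=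
    setIntegral_intervalIntegral_to_zero_le hΩm hw0 hw hfc hk hK (half_pos hθ) hf hu hA hF
  have hAI : (lam - θ + θ / 2) / (k + 1) * A ≤ (lam - θ + θ / 2) / (lam * (k + 1)) * I :=
    calc (lam - θ + θ / 2) / (k + 1) * A = (lam - θ + θ / 2) / (lam * (k + 1)) * (lam * A) := by
          field_simp
      _ ≤ (lam - θ + θ / 2) / (lam * (k + 1)) * I :=
          mul_le_mul_of_nonneg_left hspec (div_nonneg (by linarith) (by positivity))
  have hcoef : θ / (2 * lam) / (k + 1) * I =
      1 / (k + 1) * I - (lam - θ + θ / 2) / (lam * (k + 1)) * I := by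
    field_simp; ring
  have hK₁ : (C * W / V + 1) * V = C * W + V := by field_simp
  linarith

/-- Coercivity of the Hessian functional in the sublinear case: if
`f(x,z) ≤ K + (λ₁-θ)|z|^k` for `z ≤ 0`, `F(x,z) = ∫_z^0 |x|^{2sk} f(x,τ)dτ`, and for all
`u` in the admissible class (represented by pairs `(u, G)` with `G = S_k(D²u) ≥ 0`,
`u ≤ 0`) the spectral inequality `λ₁ ∫_Ω |x|^{2sk}|u|^{k+1} ≤ ∫_Ω (-u)G` holds, then
`J(u) = (1/(k+1))∫_Ω(-u)G - ∫_Ω F(x,u) ≥ (θ₁/(k+1))∫_Ω(-u)G - K₁|Ω|` for constants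
`θ₁ ∈ (0,1)`, `K₁ > 0` depending only on `k, θ, λ₁, K` and the weight. -/
theorem stmt16 (n k : ℕ) (hk : 1 ≤ k) (s lam θ K : ℝ)
    (Ω : Set (EuclideanSpace ℝ (Fin n))) (hΩm : MeasurableSet Ω)
    (hΩb : Bornology.IsBounded Ω) (hΩpos : 0 < (volume Ω).toReal)
    (hlam : 0 < lam) (hθ : 0 < θ) (hθl : θ < lam) (hK : 0 < K)
    (hw : IntegrableOn (fun x : EuclideanSpace ℝ (Fin n) => ‖x‖ ^ (2 * s * (k : ℝ))) Ω)
    (f : EuclideanSpace ℝ (Fin n) → ℝ → ℝ)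
    (hfc : ∀ x, Continuous (f x))
    (hfpos : ∀ x z, z ≤ 0 → 0 < f x z)
    (hf : ∀ x z, z ≤ 0 → f x z ≤ K + (lam - θ) * |z| ^ k) :
    ∃ θ₁ K₁ : ℝ, 0 < θ₁ ∧ θ₁ < 1 ∧ 0 < K₁ ∧
      ∀ (u G : EuclideanSpace ℝ (Fin n) → ℝ),
      (∀ x ∈ Ω, u x ≤ 0) → (∀ x ∈ Ω, 0 ≤ G x) →
      IntegrableOn (fun x => ‖x‖ ^ (2 * s * (k : ℝ)) * |u x| ^ (k + 1)) Ω →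
      IntegrableOn (fun x => ‖x‖ ^ (2 * s * (k : ℝ)) * |u x|) Ω →
      IntegrableOn (fun x => (-u x) * G x) Ω →
      IntegrableOn (fun x => ∫ τ in (u x)..0, ‖x‖ ^ (2 * s * (k : ℝ)) * f x τ) Ω →
      lam * (∫ x in Ω, ‖x‖ ^ (2 * s * (k : ℝ)) * |u x| ^ (k + 1))
        ≤ ∫ x in Ω, (-u x) * G x →
      (θ₁ / ((k : ℝ) + 1)) * (∫ x in Ω, (-u x) * G x) - K₁ * (volume Ω).toReal
        ≤ (1 / ((k : ℝ) + 1)) * (∫ x in Ω, (-u x) * G x)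
          - ∫ x in Ω, (∫ τ in (u x)..0, ‖x‖ ^ (2 * s * (k : ℝ)) * f x τ) :=
  stmt16_general n k hk s lam θ K Ω hΩm hΩpos hlam hθ hθl hK hw f hfc hf
end
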